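/- arXiv:1709.03026 — 2 statements merged into one kernel-verified Lean document; each statement's English description precedes it below -/
import Mathlib

section
/- Suppose P ≻ 0 and C are n×n real matrices satisfying the algebraic Riccati equation A P + P Aᵀ − P Cᵀ C P + B Bᵀ = 0, and suppose (A,B) is controllable (i.e., for every eigenvalue λ of Aᵀ with eigenvector x, Bᵀ x ≠ 0). Then every eigenvalue of A − P Cᵀ C has strictly negative real part. -/
/-!
Put `F = A - P Cᵀ C`. The Riccati equation is the Lyapunov equation
`F P + P Fᴴ = -(C P)ᴴ (C P) - B Bᴴ`. If `F x = μ x` with `x = P y`, the quadratic form of both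
sides at `y` gives `2 Re μ ⋅ yᴴ P y + ‖C x‖² + ‖Bᴴ y‖² = 0`. Since `P ≻ 0`, `Re μ ≥ 0` forces
`C x = 0` and `Bᴴ y = 0`; then `A x = μ x`, and the Riccati equation applied to `y` gives
`Aᴴ y = -μ y`: a left eigenvector of `A` annihilated by `Bᴴ`, against controllability.
-/

open Matrix
open scoped ComplexOrder MatrixOrder

namespace Matrix

variable {𝕜 : Type*} [RCLike 𝕜] {n m p : Type*} [Fintype n] [Fintype m] [Fintype p]

theorem dotProduct_conjTranspose_mul_self_mulVec (M : Matrix m n 𝕜) (x : n → 𝕜) :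
    star x ⬝ᵥ ((Mᴴ * M) *ᵥ x) = star (M *ᵥ x) ⬝ᵥ (M *ᵥ x) := by
  rw [← mulVec_mulVec, dotProduct_mulVec, vecMul_conjTranspose, star_star]

theorem dotProduct_mul_add_mul_conjTranspose_mulVec {F P : Matrix n n 𝕜}
    (hP : P.IsHermitian) {y : n → 𝕜} {μ : 𝕜} (hFy : F *ᵥ (P *ᵥ y) = μ • (P *ᵥ y)) :
    star y ⬝ᵥ ((F * P + P * Fᴴ) *ᵥ y) = (μ + star μ) * (star y ⬝ᵥ (P *ᵥ y)) := by
  have hPy : star y ᵥ* P = star (P *ᵥ y) := by rw [star_mulVec, hP.eq]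
  have hFP : star y ⬝ᵥ ((F * P) *ᵥ y) = μ * (star y ⬝ᵥ (P *ᵥ y)) := by
    rw [← mulVec_mulVec, hFy, dotProduct_smul, smul_eq_mul]
  have hPF : star y ⬝ᵥ ((P * Fᴴ) *ᵥ y) = star μ * (star y ⬝ᵥ (P *ᵥ y)) := by
    rw [← mulVec_mulVec, dotProduct_mulVec, hPy, dotProduct_mulVec, ← star_mulVec, hFy,
      star_smul, smul_dotProduct, ← hPy, ← dotProduct_mulVec, smul_eq_mul]
  rw [add_mulVec, dotProduct_add, hFP, hPF, add_mul]

theorem lyapunov_of_riccati {A P : Matrix n n 𝕜} {B : Matrix n m 𝕜} {C : Matrix p n 𝕜}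
    (hP : P.IsHermitian) (hric : A * P + P * Aᴴ - P * Cᴴ * C * P + B * Bᴴ = 0) :
    (A - P * Cᴴ * C) * P + P * (A - P * Cᴴ * C)ᴴ = -((C * P)ᴴ * (C * P)) - B * Bᴴ := by
  rw [← sub_eq_zero, ← hric]
  simp only [conjTranspose_sub, conjTranspose_mul, hP.eq, conjTranspose_conjTranspose, mul_sub,
    sub_mul, Matrix.mul_assoc]
  abel

theorem riccati_left_eigenvector_of_re_nonneg [DecidableEq n] {A P : Matrix n n 𝕜}
    {B : Matrix n m 𝕜} {C : Matrix p n 𝕜} (hP : P.PosDef)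
    (hric : A * P + P * Aᴴ - P * Cᴴ * C * P + B * Bᴴ = 0) {y : n → 𝕜} (hy : y ≠ 0) {μ : 𝕜}
    (hμ : 0 ≤ RCLike.re μ) (hFy : (A - P * Cᴴ * C) *ᵥ (P *ᵥ y) = μ • (P *ᵥ y)) :
    Aᴴ *ᵥ y = (-μ) • y ∧ Bᴴ *ᵥ y = 0 := by
  have energy : (μ + star μ) * (star y ⬝ᵥ (P *ᵥ y)) + star (C *ᵥ (P *ᵥ y)) ⬝ᵥ (C *ᵥ (P *ᵥ y))
      + star (Bᴴ *ᵥ y) ⬝ᵥ (Bᴴ *ᵥ y) = 0 := by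
    have h := congrArg (star y ⬝ᵥ · *ᵥ y) (lyapunov_of_riccati hP.isHermitian hric)
    rw [show B * Bᴴ = Bᴴᴴ * Bᴴ by rw [conjTranspose_conjTranspose]] at h
    simp only [dotProduct_mul_add_mul_conjTranspose_mulVec hP.isHermitian hFy, sub_mulVec,
      neg_mulVec, dotProduct_sub, dotProduct_neg, dotProduct_conjTranspose_mul_self_mulVec] at h
    rw [← mulVec_mulVec] at h
    linear_combination h
  have hμ' : 0 ≤ μ + star μ := by
    rw [RCLike.star_def, RCLike.add_conj]
    exact mul_nonneg zero_le_two (RCLike.ofReal_nonneg.2 hμ)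
  have hq := mul_nonneg hμ' (hP.dotProduct_mulVec_pos hy).le
  obtain ⟨hqC, hBy⟩ := (add_eq_zero_iff_of_nonneg
    (add_nonneg hq (dotProduct_star_self_nonneg _)) (dotProduct_star_self_nonneg _)).1 energy
  obtain ⟨-, hCx⟩ := (add_eq_zero_iff_of_nonneg hq (dotProduct_star_self_nonneg _)).1 hqC
  rw [dotProduct_star_self_eq_zero] at hCx hBy
  have hAx : A *ᵥ (P *ᵥ y) = μ • (P *ᵥ y) := by
    rwa [sub_mulVec, ← mulVec_mulVec, hCx, mulVec_zero, sub_zero] at hFy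
  refine ⟨mulVec_injective_iff_isUnit.2 hP.isUnit ?_, hBy⟩
  have h := congrArg (· *ᵥ y) hric
  simp only [add_mulVec, sub_mulVec, ← mulVec_mulVec, hAx, hCx, hBy, mulVec_zero, zero_mulVec,
    sub_zero, add_zero] at h
  rw [mulVec_smul, neg_smul]
  exact eq_neg_of_add_eq_zero_right h

end Matrix

namespace Matrix

variable {n m : Type*}

theorem conjTranspose_map_ofReal (M : Matrix m n ℝ) :
    (M.map Complex.ofReal)ᴴ = Mᵀ.map Complex.ofReal := by
  rw [← conjTranspose_map _ fun x ↦ (Complex.conj_ofReal x).symm,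
    conjTranspose_eq_transpose_of_trivial]

theorem map_ofReal_mul {k : Type*} [Fintype n] (M : Matrix m n ℝ) (N : Matrix n k ℝ) :
    (M * N).map Complex.ofReal = M.map Complex.ofReal * N.map Complex.ofReal :=
  Matrix.map_mul (f := Complex.ofRealHom)

theorem PosDef.map_ofReal [Fintype n] [DecidableEq n] {P : Matrix n n ℝ} (hP : P.PosDef) :
    (P.map Complex.ofReal).PosDef := by
  have hS : (CFC.sqrt P)ᵀ * CFC.sqrt P = P := by
    rw [← conjTranspose_eq_transpose_of_trivial, ← star_eq_conjTranspose,
      (CFC.sqrt_nonneg P).isSelfAdjoint.star_eq, CFC.sqrt_mul_sqrt_self P hP.posSemidef.nonneg]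
  refine (PosSemidef.posDef_iff_det_ne_zero ?_).2 ?_
  · rw [← hS, map_ofReal_mul, ← conjTranspose_map_ofReal]
    exact posSemidef_conjTranspose_mul_self _
  · rw [show (P.map Complex.ofReal).det = P.det from (RingHom.map_det Complex.ofRealHom P).symm]
    exact_mod_cast hP.det_pos.ne'

end Matrix

theorem stmt_2 {n : ℕ}
    (A B C P : Matrix (Fin n) (Fin n) ℝ)
    (hP : P.PosDef)
    (hric : A * P + P * Aᵀ - P * Cᵀ * C * P + B * Bᵀ = 0)
    (hctrb : ∀ (lam : ℂ) (x : Fin n → ℂ), x ≠ 0 →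
      (Aᵀ.map Complex.ofReal).mulVec x = lam • x →
      (Bᵀ.map Complex.ofReal).mulVec x ≠ 0) :
    ∀ (mu : ℂ) (x : Fin n → ℂ), x ≠ 0 →
      (((A - P * Cᵀ * C).map Complex.ofReal)).mulVec x = mu • x → mu.re < 0 := by
  intro mu x hx hmu
  by_contra! hre
  have hric' : A.map Complex.ofReal * P.map Complex.ofReal
      + P.map Complex.ofReal * (A.map Complex.ofReal)ᴴ
      - P.map Complex.ofReal * (C.map Complex.ofReal)ᴴ * C.map Complex.ofReal * P.map Complex.ofReal
      + B.map Complex.ofReal * (B.map Complex.ofReal)ᴴ = 0 := by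
    simpa only [Matrix.map_add _ Complex.ofReal_add, Matrix.map_sub _ Complex.ofReal_sub,
      map_ofReal_mul, conjTranspose_map_ofReal, Matrix.map_zero _ Complex.ofReal_zero]
      using congrArg (·.map Complex.ofReal) hric
  have hP' := hP.map_ofReal
  obtain ⟨y, hPy⟩ : ∃ y : Fin n → ℂ, P.map Complex.ofReal *ᵥ y = x :=
    ⟨(P.map Complex.ofReal)⁻¹ *ᵥ x, by
      rw [mulVec_mulVec, mul_nonsing_inv _ ((isUnit_iff_isUnit_det _).1 hP'.isUnit), one_mulVec]⟩
  have hy : y ≠ 0 := by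
    rintro rfl
    exact hx (by rw [← hPy, mulVec_zero])
  rw [Matrix.map_sub _ Complex.ofReal_sub, map_ofReal_mul, map_ofReal_mul,
    ← conjTranspose_map_ofReal, ← hPy] at hmu
  obtain ⟨hAy, hBy⟩ := Matrix.riccati_left_eigenvector_of_re_nonneg hP' hric' hy hre hmu
  rw [conjTranspose_map_ofReal] at hAy hBy
  exact hctrb (-mu) y hy hAy hBy
end

section
/- If P is symmetric positive definite and C satisfies P Cᵀ C P = A P + P Aᵀ + B Bᵀ, then Tr(C P Cᵀ) ≥ 2 Tr(A), i.e., the mutual information rate (1/2)Tr(CPCᵀ) is bounded below by Tr(A) plus the nonnegative quantity (1/2)Tr(Bᵀ P⁻¹ B). -/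
open Matrix

namespace Matrix

variable {m n k R : Type*} [Fintype m] [Fintype n] [Fintype k] [DecidableEq n]

/-- By cyclicity of the trace, `P Aᵀ P⁻¹` contributes `Tr Aᵀ = Tr A`, just as `A P P⁻¹` does. -/
theorem trace_mul_mul_transpose_eq_of_riccati [CommRing R] {A P : Matrix n n R}
    {B : Matrix n k R} {C : Matrix m n R} (hP : IsUnit P.det)
    (hric : P * Cᵀ * C * P = A * P + P * Aᵀ + B * Bᵀ) :
    (C * P * Cᵀ).trace = 2 * A.trace + (Bᵀ * P⁻¹ * B).trace :=
  calc (C * P * Cᵀ).trace = (P * Cᵀ * C * P * P⁻¹).trace := by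
        rw [mul_nonsing_inv_cancel_right _ _ hP, trace_mul_cycle, trace_mul_comm, Matrix.mul_assoc]
    _ = (A * P * P⁻¹ + P * Aᵀ * P⁻¹ + B * Bᵀ * P⁻¹).trace := by rw [hric, add_mul, add_mul]
    _ = 2 * A.trace + (Bᵀ * P⁻¹ * B).trace := by
        rw [trace_add, trace_add, mul_nonsing_inv_cancel_right _ _ hP, trace_mul_cycle,
          nonsing_inv_mul _ hP, one_mul, trace_transpose, trace_mul_cycle B,
          trace_mul_cycle P⁻¹]
        ring

theorem PosSemidef.trace_transpose_mul_inv_mul_nonneg {P : Matrix n n ℝ} (hP : P.PosSemidef)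
    (B : Matrix n k ℝ) : 0 ≤ (Bᵀ * P⁻¹ * B).trace := by
  simpa using (hP.inv.conjTranspose_mul_mul_same B).trace_nonneg

end Matrix

theorem stmt_17 {n : ℕ}
    (A B C P : Matrix (Fin n) (Fin n) ℝ)
    (hP : P.PosDef)
    (hric : P * Cᵀ * C * P = A * P + P * Aᵀ + B * Bᵀ) :
    (1 / 2) * (C * P * Cᵀ).trace
        = A.trace + (1 / 2) * (Bᵀ * P⁻¹ * B).trace
      ∧ 2 * A.trace ≤ (C * P * Cᵀ).trace := by
  have htrace := trace_mul_mul_transpose_eq_of_riccati hP.det_pos.ne'.isUnit hric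
  have hnonneg := hP.posSemidef.trace_transpose_mul_inv_mul_nonneg B
  constructor <;> linarith
end
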